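/- Let J = J₀ ⊕ J₁ be a triideal of a triring R = R₀ ⊕ R₁ with both (R₀,+,·) and (R₁,+,♯) commutative. Then the graded nilradical ♯√J := {G₀ + G₁ : G₀ ∈ R₀, G₁ ∈ R₁, G₀^m ∈ J₀ and G₁^{♯n} ∈ J₁ for some positive integers m, n} equals √J₀ ⊕ √J₁ (the direct sum of the radical of J₀ in (R₀,·) and the radical of J₁ in (R₁,♯)), and is itself a triideal of R. -/

import Mathlib

/-- A triring structure on a ring `R`: a Z₂-ring decomposition `R = R₀ ⊕ R₁`
together with a local product `♯` making `R₁` a (unital, associative) ring and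
satisfying the Hu-Liu triassociative law. The local product is modelled as a
total operation `sharp : R → R → R` whose relevant values are on `R₁`. -/
structure Triring (R : Type) [Ring R] where
  R0 : AddSubgroup R
  R1 : AddSubgroup R
  compl : IsCompl R0 R1
  mul00 : ∀ x ∈ R0, ∀ y ∈ R0, x * y ∈ R0
  mul01 : ∀ x ∈ R0, ∀ y ∈ R1, x * y ∈ R1 ∧ y * x ∈ R1
  mul11 : ∀ x ∈ R1, ∀ y ∈ R1, x * y = 0
  sharp : R → R → R
  sharp_mem : ∀ x ∈ R1, ∀ y ∈ R1, sharp x y ∈ R1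
  sharp_assoc : ∀ x ∈ R1, ∀ y ∈ R1, ∀ z ∈ R1,
    sharp (sharp x y) z = sharp x (sharp y z)
  sharp_addl : ∀ x ∈ R1, ∀ y ∈ R1, ∀ z ∈ R1,
    sharp (x + y) z = sharp x z + sharp y z
  sharp_addr : ∀ x ∈ R1, ∀ y ∈ R1, ∀ z ∈ R1,
    sharp x (y + z) = sharp x y + sharp x z
  oneSharp : R
  oneSharp_mem : oneSharp ∈ R1
  sharp_one : ∀ x ∈ R1, sharp oneSharp x = x ∧ sharp x oneSharp = x
  tri_l : ∀ (x : R), ∀ α ∈ R1, ∀ β ∈ R1, x * sharp α β = sharp (x * α) β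
  tri_r : ∀ (x : R), ∀ α ∈ R1, ∀ β ∈ R1, sharp α β * x = sharp α (β * x)

/-- The `n`-fold local-product power `α^{♯n}`, with `α^{♯0} = 1♯`. -/
def sharpPow {R : Type} [Ring R] (T : Triring R) (a : R) : ℕ → R
  | 0 => T.oneSharp
  | n + 1 => T.sharp a (sharpPow T a n)

/-! Both radicals are radicals of an additive subgroup `S` of a ring that is stable under left
multiplication by the elements in question: `√J₀` inside `R` itself, `√J₁` inside the ring
`(R₁, +, ♯)` with `J₁` pulled back to it. For commuting `x` and `y` every term of the binomial
expansion of `(x + y)^{m+n}` then lies in `S`, as in the commutative case. Absorption of the mixed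
products rests on the triassociative law together with commutativity of `♯`, which give
`(a b)^{♯n} = aⁿ b^{♯n}` and `(b a)^{♯n} = b^{♯n} aⁿ` for `a ∈ R₀`, `b ∈ R₁`. -/

theorem pow_mul_mem_of_forall_mul_mem {M S : Type*} [Monoid M] [SetLike S M] {s : S} {x c : M}
    (hx : ∀ c ∈ s, x * c ∈ s) (hc : c ∈ s) (n : ℕ) : x ^ n * c ∈ s := by
  induction n with
  | zero => simpa using hc
  | succ k ih => rw [pow_succ', mul_assoc]; exact hx _ ih

theorem mul_pow_mem_of_forall_mul_mem {M S : Type*} [Monoid M] [SetLike S M] {s : S} {x c : M}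
    (hx : ∀ c ∈ s, c * x ∈ s) (hc : c ∈ s) (n : ℕ) : c * x ^ n ∈ s := by
  induction n with
  | zero => simpa using hc
  | succ k ih => rw [pow_succ, ← mul_assoc]; exact hx _ ih

theorem Commute.add_pow_add_mem {A S : Type*} [Semiring A] [SetLike S A] [AddSubmonoidClass S A]
    {s : S} {x y : A} (hxy : Commute x y) (hx : ∀ c ∈ s, x * c ∈ s) (hy : ∀ c ∈ s, y * c ∈ s)
    {m n : ℕ} (hxm : x ^ m ∈ s) (hyn : y ^ n ∈ s) : (x + y) ^ (m + n) ∈ s := by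
  rw [hxy.add_pow']
  refine sum_mem fun ij hij => nsmul_mem ?_ _
  rw [Finset.HasAntidiagonal.mem_antidiagonal] at hij
  obtain ⟨i, j⟩ := ij
  rcases le_or_gt m i with hmi | hin
  · obtain ⟨k, rfl⟩ := Nat.exists_eq_add_of_le hmi
    rw [add_comm m k, pow_add, mul_assoc, (hxy.pow_pow m j).eq]
    exact pow_mul_mem_of_forall_mul_mem hx (pow_mul_mem_of_forall_mul_mem hy hxm j) k
  · obtain ⟨k, rfl⟩ := Nat.exists_eq_add_of_le (show n ≤ j by simp only at hij; omega)
    rw [add_comm n k, pow_add]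
    exact pow_mul_mem_of_forall_mul_mem hx (pow_mul_mem_of_forall_mul_mem hy hyn k) i

theorem neg_pow_mem {A S : Type*} [Monoid A] [HasDistribNeg A] [SetLike S A] [NegMemClass S A]
    {s : S} {x : A} {m : ℕ} (h : x ^ m ∈ s) : (-x) ^ m ∈ s := by
  rcases Nat.even_or_odd m with hm | hm
  · rwa [hm.neg_pow]
  · rw [hm.neg_pow]
    exact neg_mem h

namespace Triring

variable {R : Type} [Ring R] (T : Triring R)

theorem sharp_zero_left {a : R} (ha : a ∈ T.R1) : T.sharp 0 a = 0 := by
  simpa using T.sharp_addl 0 T.R1.zero_mem 0 T.R1.zero_mem a ha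

theorem sharp_zero_right {a : R} (ha : a ∈ T.R1) : T.sharp a 0 = 0 := by
  simpa using T.sharp_addr a ha 0 T.R1.zero_mem 0 T.R1.zero_mem

instance : Ring T.R1 :=
  { (inferInstance : AddCommGroup T.R1) with
    mul := fun a b => ⟨T.sharp a b, T.sharp_mem _ a.2 _ b.2⟩
    one := ⟨T.oneSharp, T.oneSharp_mem⟩
    mul_assoc := fun a b c => Subtype.ext (T.sharp_assoc _ a.2 _ b.2 _ c.2)
    one_mul := fun a => Subtype.ext (T.sharp_one _ a.2).1
    mul_one := fun a => Subtype.ext (T.sharp_one _ a.2).2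
    left_distrib := fun a b c => Subtype.ext (T.sharp_addr _ a.2 _ b.2 _ c.2)
    right_distrib := fun a b c => Subtype.ext (T.sharp_addl _ a.2 _ b.2 _ c.2)
    zero_mul := fun a => Subtype.ext (T.sharp_zero_left a.2)
    mul_zero := fun a => Subtype.ext (T.sharp_zero_right a.2) }

theorem coe_mul (a b : T.R1) : ((a * b : T.R1) : R) = T.sharp a b := rfl

theorem sharpPow_eq_coe_pow (a : T.R1) (n : ℕ) : sharpPow T a n = ((a ^ n : T.R1) : R) := by
  induction n with
  | zero => rfl
  | succ k ih => rw [sharpPow, ih, pow_succ', coe_mul]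

theorem sharpPow_mem {a : R} (ha : a ∈ T.R1) (n : ℕ) : sharpPow T a n ∈ T.R1 :=
  T.sharpPow_eq_coe_pow ⟨a, ha⟩ n ▸ ((⟨a, ha⟩ : T.R1) ^ n).2

theorem sharp_mul_eq_mul_sharp (hcomm1 : ∀ α ∈ T.R1, ∀ β ∈ T.R1, T.sharp α β = T.sharp β α)
    {α β c : R} (hα : α ∈ T.R1) (hβ : β ∈ T.R1) (hcβ : c * β ∈ T.R1) :
    T.sharp α (c * β) = c * T.sharp α β := by
  rw [hcomm1 α hα _ hcβ, ← T.tri_l c β hβ α hα, hcomm1 β hβ α hα]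

theorem mul_sharp_eq_sharp_mul (hcomm1 : ∀ α ∈ T.R1, ∀ β ∈ T.R1, T.sharp α β = T.sharp β α)
    {α β c : R} (hα : α ∈ T.R1) (hβ : β ∈ T.R1) (hαc : α * c ∈ T.R1) :
    T.sharp (α * c) β = T.sharp α β * c := by
  rw [hcomm1 _ hαc β hβ, ← T.tri_r c β hβ α hα, hcomm1 β hβ α hα]

theorem pow_mul_mem_R1 {a w : R} (ha : a ∈ T.R0) (hw : w ∈ T.R1) (n : ℕ) : a ^ n * w ∈ T.R1 :=
  pow_mul_mem_of_forall_mul_mem (fun c hc => (T.mul01 a ha c hc).1) hw n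

theorem mul_pow_mem_R1 {a w : R} (ha : a ∈ T.R0) (hw : w ∈ T.R1) (n : ℕ) : w * a ^ n ∈ T.R1 :=
  mul_pow_mem_of_forall_mul_mem (fun c hc => (T.mul01 a ha c hc).2) hw n

theorem sharpPow_mul_left (hcomm1 : ∀ α ∈ T.R1, ∀ β ∈ T.R1, T.sharp α β = T.sharp β α)
    {a b : R} (ha : a ∈ T.R0) (hb : b ∈ T.R1) (n : ℕ) :
    sharpPow T (a * b) n = a ^ n * sharpPow T b n := by
  induction n with
  | zero => simp [sharpPow]
  | succ k ih =>
    have hbk := T.sharpPow_mem hb k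
    rw [sharpPow, ih, ← T.tri_l a b hb _ (T.pow_mul_mem_R1 ha hbk k),
      T.sharp_mul_eq_mul_sharp hcomm1 hb hbk (T.pow_mul_mem_R1 ha hbk k), ← mul_assoc, ← pow_succ',
      ← sharpPow]

theorem sharpPow_mul_right (hcomm1 : ∀ α ∈ T.R1, ∀ β ∈ T.R1, T.sharp α β = T.sharp β α)
    {a b : R} (ha : a ∈ T.R0) (hb : b ∈ T.R1) (n : ℕ) :
    sharpPow T (b * a) n = sharpPow T b n * a ^ n := by
  induction n with
  | zero => simp [sharpPow]
  | succ k ih =>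
    have hbk := T.sharpPow_mem hb k
    rw [sharpPow, ih, T.mul_sharp_eq_sharp_mul hcomm1 hb (T.mul_pow_mem_R1 ha hbk k)
      (T.mul01 a ha b hb).2, ← T.tri_r _ b hb _ hbk, mul_assoc, ← pow_succ, ← sharpPow]

theorem commute_of_sharp_comm (hcomm1 : ∀ α ∈ T.R1, ∀ β ∈ T.R1, T.sharp α β = T.sharp β α)
    (a b : T.R1) : Commute a b :=
  Subtype.ext (hcomm1 _ a.2 _ b.2)

theorem sharpPow_mem_iff {J : AddSubgroup R} {a : R} (ha : a ∈ T.R1) (n : ℕ) :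
    sharpPow T a n ∈ J ↔ (⟨a, ha⟩ : T.R1) ^ n ∈ J.comap T.R1.subtype :=
  T.sharpPow_eq_coe_pow ⟨a, ha⟩ n ▸ Iff.rfl

def radical0 (J0 : AddSubgroup R) : Set R := {x | x ∈ T.R0 ∧ ∃ m > 0, x ^ m ∈ J0}

def radical1 (J1 : AddSubgroup R) : Set R := {x | x ∈ T.R1 ∧ ∃ m > 0, sharpPow T x m ∈ J1}

variable {T} {J0 J1 : AddSubgroup R}

theorem add_mem_radical0 (hcomm0 : ∀ x ∈ T.R0, ∀ y ∈ T.R0, x * y = y * x)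
    (hI1 : ∀ x ∈ T.R0, ∀ j ∈ J0, x * j ∈ J0) :
    ∀ x ∈ T.radical0 J0, ∀ y ∈ T.radical0 J0, x + y ∈ T.radical0 J0 := by
  rintro x ⟨hx, m, hm, hxm⟩ y ⟨hy, n, -, hyn⟩
  exact ⟨T.R0.add_mem hx hy, m + n, by omega, Commute.add_pow_add_mem (hcomm0 x hx y hy)
    (hI1 x hx) (hI1 y hy) hxm hyn⟩

theorem neg_mem_radical0 : ∀ x ∈ T.radical0 J0, -x ∈ T.radical0 J0 := by
  rintro x ⟨hx, m, hm, hxm⟩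
  exact ⟨T.R0.neg_mem hx, m, hm, neg_pow_mem hxm⟩

theorem add_mem_radical1 (hcomm1 : ∀ α ∈ T.R1, ∀ β ∈ T.R1, T.sharp α β = T.sharp β α)
    (hI4 : ∀ x ∈ T.R1, ∀ j ∈ J1, T.sharp x j ∈ J1) :
    ∀ x ∈ T.radical1 J1, ∀ y ∈ T.radical1 J1, x + y ∈ T.radical1 J1 := by
  rintro x ⟨hx, m, hm, hxm⟩ y ⟨hy, n, -, hyn⟩
  rw [T.sharpPow_mem_iff hx] at hxm
  rw [T.sharpPow_mem_iff hy] at hyn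
  refine ⟨T.R1.add_mem hx hy, m + n, by omega, (T.sharpPow_mem_iff (T.R1.add_mem hx hy) _).2 ?_⟩
  exact (T.commute_of_sharp_comm hcomm1 _ _).add_pow_add_mem
    (fun c hc => hI4 x hx c hc) (fun c hc => hI4 y hy c hc) hxm hyn

theorem neg_mem_radical1 : ∀ x ∈ T.radical1 J1, -x ∈ T.radical1 J1 := by
  rintro x ⟨hx, m, hm, hxm⟩
  rw [T.sharpPow_mem_iff hx] at hxm
  exact ⟨T.R1.neg_mem hx, m, hm, (T.sharpPow_mem_iff (T.R1.neg_mem hx) _).2 (neg_pow_mem hxm)⟩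

theorem R0_mul_radical0 (hcomm0 : ∀ x ∈ T.R0, ∀ y ∈ T.R0, x * y = y * x)
    (hI1 : ∀ x ∈ T.R0, ∀ j ∈ J0, x * j ∈ J0) :
    ∀ x ∈ T.R0, ∀ j ∈ T.radical0 J0, x * j ∈ T.radical0 J0 ∧ j * x ∈ T.radical0 J0 := by
  rintro x hx j ⟨hj, m, hm, hjm⟩
  have hxj : x * j ∈ T.radical0 J0 := by
    refine ⟨T.mul00 x hx j hj, m, hm, ?_⟩
    rw [Commute.mul_pow (hcomm0 x hx j hj)]
    exact pow_mul_mem_of_forall_mul_mem (hI1 x hx) hjm m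
  exact ⟨hxj, hcomm0 j hj x hx ▸ hxj⟩

theorem R1_mul_radical0 (hcomm1 : ∀ α ∈ T.R1, ∀ β ∈ T.R1, T.sharp α β = T.sharp β α)
    (hI2 : ∀ x ∈ T.R1, ∀ j ∈ J0, x * j ∈ J1 ∧ j * x ∈ J1) :
    ∀ x ∈ T.R1, ∀ j ∈ T.radical0 J0, x * j ∈ T.radical1 J1 ∧ j * x ∈ T.radical1 J1 := by
  rintro x hx j ⟨hj, m, hm, hjm⟩
  refine ⟨⟨(T.mul01 j hj x hx).2, m, hm, ?_⟩, ⟨(T.mul01 j hj x hx).1, m, hm, ?_⟩⟩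
  · rw [T.sharpPow_mul_right hcomm1 hj hx]
    exact (hI2 _ (T.sharpPow_mem hx m) _ hjm).1
  · rw [T.sharpPow_mul_left hcomm1 hj hx]
    exact (hI2 _ (T.sharpPow_mem hx m) _ hjm).2

theorem R0_mul_radical1 (hcomm1 : ∀ α ∈ T.R1, ∀ β ∈ T.R1, T.sharp α β = T.sharp β α)
    (hI3 : ∀ x ∈ T.R0, ∀ j ∈ J1, x * j ∈ J1 ∧ j * x ∈ J1) :
    ∀ x ∈ T.R0, ∀ j ∈ T.radical1 J1, x * j ∈ T.radical1 J1 ∧ j * x ∈ T.radical1 J1 := by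
  rintro x hx j ⟨hj, m, hm, hjm⟩
  refine ⟨⟨(T.mul01 x hx j hj).1, m, hm, ?_⟩, ⟨(T.mul01 x hx j hj).2, m, hm, ?_⟩⟩
  · rw [T.sharpPow_mul_left hcomm1 hx hj]
    exact pow_mul_mem_of_forall_mul_mem (fun c hc => (hI3 x hx c hc).1) hjm m
  · rw [T.sharpPow_mul_right hcomm1 hx hj]
    exact mul_pow_mem_of_forall_mul_mem (fun c hc => (hI3 x hx c hc).2) hjm m

theorem R1_sharp_radical1 (hcomm1 : ∀ α ∈ T.R1, ∀ β ∈ T.R1, T.sharp α β = T.sharp β α)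
    (hI4 : ∀ x ∈ T.R1, ∀ j ∈ J1, T.sharp x j ∈ J1) :
    ∀ x ∈ T.R1, ∀ j ∈ T.radical1 J1,
      T.sharp x j ∈ T.radical1 J1 ∧ T.sharp j x ∈ T.radical1 J1 := by
  rintro x hx j ⟨hj, m, hm, hjm⟩
  rw [T.sharpPow_mem_iff hj] at hjm
  have hxj : T.sharp x j ∈ T.radical1 J1 := by
    refine ⟨T.sharp_mem x hx j hj, m, hm, (T.sharpPow_mem_iff (T.sharp_mem x hx j hj) m).2 ?_⟩
    change ((⟨x, hx⟩ : T.R1) * ⟨j, hj⟩) ^ m ∈ _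
    rw [(T.commute_of_sharp_comm hcomm1 _ _).mul_pow]
    exact pow_mul_mem_of_forall_mul_mem (x := (⟨x, hx⟩ : T.R1)) (fun c hc => hI4 x hx c hc) hjm m
  exact ⟨hxj, hcomm1 x hx j hj ▸ hxj⟩

end Triring

theorem extended_nullstellensatz_stmt5_general {R : Type} [Ring R] (T : Triring R)
    (hcomm0 : ∀ x ∈ T.R0, ∀ y ∈ T.R0, x * y = y * x)
    (hcomm1 : ∀ α ∈ T.R1, ∀ β ∈ T.R1, T.sharp α β = T.sharp β α)
    (J0 J1 : AddSubgroup R)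
    (hI1 : ∀ x ∈ T.R0, ∀ j ∈ J0, x * j ∈ J0 ∧ j * x ∈ J0)
    (hI2 : ∀ x ∈ T.R1, ∀ j ∈ J0, x * j ∈ J1 ∧ j * x ∈ J1)
    (hI3 : ∀ x ∈ T.R0, ∀ j ∈ J1, x * j ∈ J1 ∧ j * x ∈ J1)
    (hI4 : ∀ x ∈ T.R1, ∀ j ∈ J1, T.sharp x j ∈ J1 ∧ T.sharp j x ∈ J1) :
    -- the radicals, computed in the commutative rings (R₀,·) and (R₁,♯):
    let Rad0 : Set R := {x | x ∈ T.R0 ∧ ∃ m > 0, x ^ m ∈ J0}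
    let Rad1 : Set R := {x | x ∈ T.R1 ∧ ∃ m > 0, sharpPow T x m ∈ J1}
    -- ♯√J = √J₀ ⊕ √J₁ is a triideal:
    (∀ x ∈ Rad0, ∀ y ∈ Rad0, x + y ∈ Rad0) ∧ (∀ x ∈ Rad0, -x ∈ Rad0) ∧
    (∀ x ∈ Rad1, ∀ y ∈ Rad1, x + y ∈ Rad1) ∧ (∀ x ∈ Rad1, -x ∈ Rad1) ∧
    (∀ x ∈ T.R0, ∀ j ∈ Rad0, x * j ∈ Rad0 ∧ j * x ∈ Rad0) ∧
    (∀ x ∈ T.R1, ∀ j ∈ Rad0, x * j ∈ Rad1 ∧ j * x ∈ Rad1) ∧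
    (∀ x ∈ T.R0, ∀ j ∈ Rad1, x * j ∈ Rad1 ∧ j * x ∈ Rad1) ∧
    (∀ x ∈ T.R1, ∀ j ∈ Rad1, T.sharp x j ∈ Rad1 ∧ T.sharp j x ∈ Rad1) := by
  have hI1_left : ∀ x ∈ T.R0, ∀ j ∈ J0, x * j ∈ J0 := fun x hx j hj => (hI1 x hx j hj).1
  have hI4_left : ∀ x ∈ T.R1, ∀ j ∈ J1, T.sharp x j ∈ J1 := fun x hx j hj => (hI4 x hx j hj).1
  exact ⟨T.add_mem_radical0 hcomm0 hI1_left, T.neg_mem_radical0, T.add_mem_radical1 hcomm1 hI4_left,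
    T.neg_mem_radical1, T.R0_mul_radical0 hcomm0 hI1_left, T.R1_mul_radical0 hcomm1 hI2,
    T.R0_mul_radical1 hcomm1 hI3, T.R1_sharp_radical1 hcomm1 hI4_left⟩

/-- For a triideal `J = J₀ ⊕ J₁` of a triring with commutative even part and
commutative local product, the graded nilradical
`♯√J = √J₀ ⊕ √J₁ = {G₀ + G₁ | G₀^m ∈ J₀, G₁^{♯n} ∈ J₁ for some m, n > 0}`
is itself a triideal: each component `√Jᵢ` is an additive subgroup and the pair
satisfies all the triideal multiplication conditions. -/
theorem extended_nullstellensatz_stmt5 {R : Type} [Ring R] (T : Triring R)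
    (hcomm0 : ∀ x ∈ T.R0, ∀ y ∈ T.R0, x * y = y * x)
    (hcomm1 : ∀ α ∈ T.R1, ∀ β ∈ T.R1, T.sharp α β = T.sharp β α)
    (J0 J1 : AddSubgroup R) (hJ0 : J0 ≤ T.R0) (hJ1 : J1 ≤ T.R1)
    (hI1 : ∀ x ∈ T.R0, ∀ j ∈ J0, x * j ∈ J0 ∧ j * x ∈ J0)
    (hI2 : ∀ x ∈ T.R1, ∀ j ∈ J0, x * j ∈ J1 ∧ j * x ∈ J1)
    (hI3 : ∀ x ∈ T.R0, ∀ j ∈ J1, x * j ∈ J1 ∧ j * x ∈ J1)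
    (hI4 : ∀ x ∈ T.R1, ∀ j ∈ J1, T.sharp x j ∈ J1 ∧ T.sharp j x ∈ J1) :
    -- the radicals, computed in the commutative rings (R₀,·) and (R₁,♯):
    let Rad0 : Set R := {x | x ∈ T.R0 ∧ ∃ m > 0, x ^ m ∈ J0}
    let Rad1 : Set R := {x | x ∈ T.R1 ∧ ∃ m > 0, sharpPow T x m ∈ J1}
    -- ♯√J = √J₀ ⊕ √J₁ is a triideal:
    (∀ x ∈ Rad0, ∀ y ∈ Rad0, x + y ∈ Rad0) ∧ (∀ x ∈ Rad0, -x ∈ Rad0) ∧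
    (∀ x ∈ Rad1, ∀ y ∈ Rad1, x + y ∈ Rad1) ∧ (∀ x ∈ Rad1, -x ∈ Rad1) ∧
    (∀ x ∈ T.R0, ∀ j ∈ Rad0, x * j ∈ Rad0 ∧ j * x ∈ Rad0) ∧
    (∀ x ∈ T.R1, ∀ j ∈ Rad0, x * j ∈ Rad1 ∧ j * x ∈ Rad1) ∧
    (∀ x ∈ T.R0, ∀ j ∈ Rad1, x * j ∈ Rad1 ∧ j * x ∈ Rad1) ∧
    (∀ x ∈ T.R1, ∀ j ∈ Rad1, T.sharp x j ∈ Rad1 ∧ T.sharp j x ∈ Rad1) :=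
  extended_nullstellensatz_stmt5_general T hcomm0 hcomm1 J0 J1 hI1 hI2 hI3 hI4
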